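/- (Ruskey–Williams) For every n ≥ 3, the canonical recycle sequence D_n is a Hamilton sequence for the restricted rotator graph RR_n({n−1,n}). -/

import Mathlib

/-!
Positions are 0-indexed. Write `n = N + 1`, `τ = σ_n` and `ι : S_N → S_n` for the embedding
that fixes position `0` and acts on the last `N` positions. The `n` entries that `recycle_n`
substitutes for `r` multiply to `ι(σ_r)`, and for `r ∈ {N - 1, N}` their first `k < n` partial
products are `ι(σ_{k-1}) τ^k`, independently of `r`. The step from `k` to `k + 1` uses
`σ_{n-1} = τ · (N-1 N)`: conjugating this transposition by `τ^(k+1)` turns it into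
`ι((k-2 k-1))`, and `σ_{k-1} · (k-2 k-1) = σ_k`. Hence the partial product of `recycle_n(S)` at
`n q + k` is `ι(P_q σ_{k-1}) τ^k`, where `P_q` is the `q`-th partial product of `S`. Every
permutation is `ι(x) τ^k` for a unique `x` and `k < n` (`k` is read off from the preimage of `0`),
so these are pairwise distinct exactly when the `P_q` are, and the full product is `ι(1) = 1`.
Induction from `D_2 = (2, 2)` gives the theorem.
-/

open Equiv

/-- The prefix-rotation `σ_r = (1 2 ⋯ r)` of positions, 0-indexed as a
permutation of `Fin n` (it sends position `i` to `i+1` for `i < r-1`,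
sends position `r-1` to `0`, and fixes all positions `≥ r`). -/
def sigmaRot (n r : ℕ) : Equiv.Perm (Fin n) :=
  if h : r - 1 < n then Fin.cycleRange ⟨r - 1, h⟩ else 1

/-- The permutation `σ_{r₁}σ_{r₂}⋯σ_{r_i}` (composed left-to-right) given by the
first `i` entries of the sequence `S`. -/
def partialProd (n : ℕ) (S : List ℕ) (i : ℕ) : Equiv.Perm (Fin n) :=
  ((S.take i).map (sigmaRot n)).prod

/-- `S` is a Hamilton sequence for the restricted rotator graph `RR_n(R)`. -/
def IsHamiltonSeq (n : ℕ) (R : Set ℕ) (S : List ℕ) : Prop :=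
  S.length = Nat.factorial n ∧
  (∀ r ∈ S, r ∈ R) ∧
  (∀ i < Nat.factorial n, ∀ j < Nat.factorial n,
      partialProd n S i = partialProd n S j → i = j) ∧
  partialProd n S S.length = 1

/-- The value (0-indexed symbol) at the last position of the string `a`;
the one-line-notation symbol there is `lastVal a + 1`. -/
def lastVal {n : ℕ} (a : Equiv.Perm (Fin n)) : ℕ :=
  if h : 0 < n then ((a ⟨n - 1, Nat.sub_lt h Nat.one_pos⟩ : Fin n) : ℕ) else 0

/-- Arc relation of the restricted incomplete rotator graph `RIR_n(R,m)`:
both endpoints have last symbol `≤ m` and `b = a·σ_r` for some `r ∈ R`. -/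
def RIRAdj (n m : ℕ) (R : Set ℕ) (a b : Equiv.Perm (Fin n)) : Prop :=
  lastVal a < m ∧ lastVal b < m ∧ ∃ r ∈ R, b = a * sigmaRot n r

/-- `RIR_n(R,m)` is strongly connected. -/
def StronglyConnectedRIR (n m : ℕ) (R : Set ℕ) : Prop :=
  ∀ a b : Equiv.Perm (Fin n), lastVal a < m → lastVal b < m →
    Relation.ReflTransGen (RIRAdj n m R) a b

/-- The reuse operation: replace each entry `r` by `n,…,n,n+1-r` (`n-1` copies of `n`). -/
def reuseOp (n : ℕ) (S : List ℕ) : List ℕ :=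
  (S.map (fun r => List.replicate (n - 1) n ++ [n + 1 - r])).flatten

/-- Corbett's reuse sequences: `C₁ = (1)` and `C_k = reuse_k(C_{k-1})`. -/
def corbettC : ℕ → List ℕ
  | 0 => []
  | 1 => [1]
  | k + 2 => reuseOp (k + 2) (corbettC (k + 1))

/-- The recycle operation: replace each entry `r` by
`n, n, n-1, …, n-1, n, …, n` (`r-1` copies of `n-1`, then `n-r-1` copies of `n`). -/
def recycleOp (n : ℕ) (S : List ℕ) : List ℕ :=
  (S.map (fun r => n :: n :: (List.replicate (r - 1) (n - 1) ++ List.replicate (n - r - 1) n))).flatten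

/-- The canonical recycle sequences: `D₁ = (1)` and `D_k = recycle_k(D_{k-1})`. -/
def recycleD : ℕ → List ℕ
  | 0 => []
  | 1 => [1]
  | k + 2 => recycleOp (k + 2) (recycleD (k + 1))

/-- The rewind operation `rewind_m(S)` (with `S = T, n-1, n-1`):
`(T,n-1,n)`, then `m-2` copies of `(T,n)`, then `(T,n-1,n)`, then `m-2` copies of `n`. -/
def rewindOp (n m : ℕ) (S : List ℕ) : List ℕ :=
  (S.dropLast.dropLast ++ [n - 1, n])
    ++ (List.replicate (m - 2) (S.dropLast.dropLast ++ [n])).flatten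
    ++ (S.dropLast.dropLast ++ [n - 1, n])
    ++ List.replicate (m - 2) n

/-- The canonical rewind sequences: `W₂ = (2,2)` and `W_k = rewind_k(W_{k-1})`. -/
def rewindW : ℕ → List ℕ
  | 0 => []
  | 1 => []
  | 2 => [2, 2]
  | k + 3 => rewindOp (k + 3) (k + 3) (rewindW (k + 2))

/-- `S` is a Hamilton sequence for the restricted incomplete rotator graph `RIR_n(R,m)`,
starting from the string `n n-1 ⋯ 1` (which is `Fin.revPerm`). -/
def IsHamiltonSeqRIR (n m : ℕ) (R : Set ℕ) (S : List ℕ) : Prop :=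
  S.length = m * Nat.factorial (n - 1) ∧
  (∀ r ∈ S, r ∈ R) ∧
  (∀ i < S.length, ∀ j < S.length,
      Fin.revPerm * partialProd n S i = Fin.revPerm * partialProd n S j → i = j) ∧
  {b : Equiv.Perm (Fin n) | ∃ i < S.length, b = Fin.revPerm * partialProd n S i}
    = {b : Equiv.Perm (Fin n) | lastVal b < m} ∧
  Fin.revPerm * partialProd n S S.length = Fin.revPerm

/-- The cyclic shift `shift²` moving the first two entries to the end. -/
def shift2 (S : List ℕ) : List ℕ := S.drop 2 ++ S.take 2


def liftPerm (N : ℕ) : Perm (Fin N) →* Perm (Fin (N + 1)) :=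
  Perm.extendDomainHom (finSuccAboveEquiv 0)

@[simp]
lemma liftPerm_apply_zero {N : ℕ} (x : Perm (Fin N)) : liftPerm N x 0 = 0 :=
  Perm.extendDomain_apply_not_subtype _ _ (not_not.mpr rfl)

@[simp]
lemma liftPerm_apply_succ {N : ℕ} (x : Perm (Fin N)) (i : Fin N) :
    liftPerm N x i.succ = (x i).succ := by
  have h := Perm.extendDomain_apply_image x (finSuccAboveEquiv 0) i
  simp only [finSuccAboveEquiv_apply, Fin.succAbove_zero] at h
  exact h

lemma liftPerm_injective (N : ℕ) : Function.Injective (liftPerm N) :=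
  Perm.extendDomainHom_injective _

lemma liftPerm_swap {N : ℕ} (i j : Fin N) : liftPerm N (swap i j) = swap i.succ j.succ := by
  ext x
  cases x using Fin.cases with
  | zero => simp [swap_apply_of_ne_of_ne (Fin.succ_ne_zero i).symm (Fin.succ_ne_zero j).symm]
  | succ x => simp [(Fin.succ_injective N).swap_apply]

lemma val_finRotate_pow_apply (N k : ℕ) (x : Fin (N + 1)) :
    ((finRotate (N + 1) ^ k) x : ℕ) = (x + k) % (N + 1) := by
  induction k with
  | zero => simp [Nat.mod_eq_of_lt x.isLt]
  | succ k ih =>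
    rw [pow_succ', Perm.mul_apply, finRotate_apply, Fin.val_add, ih, Fin.val_one', Nat.mod_add_mod,
      Nat.add_mod_mod, add_assoc]

lemma finRotate_pow_self (N : ℕ) : finRotate (N + 1) ^ (N + 1) = 1 := by
  ext x
  simp [val_finRotate_pow_apply, Nat.mod_eq_of_lt x.isLt]

lemma liftPerm_mul_finRotate_pow_inj {N k l : ℕ} {x y : Perm (Fin N)} (hk : k ≤ N)
    (hl : l ≤ N)
    (h : liftPerm N x * finRotate (N + 1) ^ k = liftPerm N y * finRotate (N + 1) ^ l) :
    x = y ∧ k = l := by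
  set τ := finRotate (N + 1)
  have hl0 : (τ ^ l) ((τ ^ k)⁻¹ 0) = 0 := by
    apply (liftPerm N y).injective
    rw [liftPerm_apply_zero, ← Perm.mul_apply, ← h, ← Perm.mul_apply, mul_inv_cancel_right,
      liftPerm_apply_zero]
  have hkl : (τ ^ l) 0 = (τ ^ k) 0 :=
    calc (τ ^ l) 0 = (τ ^ l * τ ^ k * (τ ^ k)⁻¹) 0 := by rw [mul_inv_cancel_right]
      _ = (τ ^ k * τ ^ l * (τ ^ k)⁻¹) 0 := by rw [pow_mul_comm]
      _ = (τ ^ k) 0 := by rw [mul_assoc, Perm.mul_apply, Perm.mul_apply, hl0]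
  have hval := congrArg Fin.val hkl
  simp only [τ, val_finRotate_pow_apply, Fin.val_zero, zero_add,
    Nat.mod_eq_of_lt (Nat.lt_succ_of_le hk), Nat.mod_eq_of_lt (Nat.lt_succ_of_le hl)] at hval
  subst hval
  exact ⟨liftPerm_injective N (mul_right_cancel h), rfl⟩

lemma sigmaRot_of_le_one {M r : ℕ} (hr : r ≤ 1) : sigmaRot M r = 1 := by
  unfold sigmaRot
  split_ifs with h
  · simp only [show r - 1 = 0 by omega]; exact Fin.cycleRange_mk_zero _
  · rfl

lemma sigmaRot_self (N : ℕ) : sigmaRot (N + 1) (N + 1) = finRotate (N + 1) := by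
  simp [sigmaRot, ← Fin.cycleRange_last, Fin.last]

lemma val_sigmaRot_apply {M r : ℕ} (hr : r ≤ M) (x : Fin M) :
    (sigmaRot M r x : ℕ) =
      if (x : ℕ) + 1 < r then (x : ℕ) + 1 else if (x : ℕ) + 1 = r then 0 else (x : ℕ) := by
  have hr' : r - 1 < M := by have := x.pos; omega
  rw [sigmaRot, dif_pos hr']
  rcases lt_trichotomy (x : ℕ) (r - 1) with h | h | h
  · rw [Fin.coe_cycleRange_of_lt (Fin.mk_lt_mk.mpr h : _), if_pos (by omega)]
  · rw [Fin.coe_cycleRange_of_le (Fin.le_def.mpr h.le), if_pos (Fin.ext h)]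
    split_ifs <;> omega
  · rw [Fin.cycleRange_of_gt (Fin.lt_def.mpr h), if_neg (by omega), if_neg (by omega)]

lemma sigmaRot_succ {M c : ℕ} (hc : 1 ≤ c) (hcM : c < M) :
    sigmaRot M (c + 1) = sigmaRot M c * swap ⟨c - 1, by omega⟩ ⟨c, hcM⟩ := by
  ext x
  rw [Perm.mul_apply, val_sigmaRot_apply hcM, swap_apply_def]
  split_ifs <;> rw [val_sigmaRot_apply hcM.le] <;> simp only [Fin.ext_iff] at * <;>
    split_ifs <;> omega

lemma partialProd_append_of_le {n i : ℕ} {S : List ℕ} (T : List ℕ) (hi : i ≤ S.length) :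
    partialProd n (S ++ T) i = partialProd n S i := by
  rw [partialProd, List.take_append_of_le_length hi, partialProd]

lemma partialProd_append_length_add (n : ℕ) (S T : List ℕ) (i : ℕ) :
    partialProd n (S ++ T) (S.length + i) = (S.map (sigmaRot n)).prod * partialProd n T i := by
  simp [partialProd, List.take_append, List.take_of_length_le]

lemma partialProd_length (n : ℕ) (S : List ℕ) :
    partialProd n S S.length = (S.map (sigmaRot n)).prod := by
  simp [partialProd]

def recycleBlock (n r : ℕ) : List ℕ :=
  n :: n :: (List.replicate (r - 1) (n - 1) ++ List.replicate (n - r - 1) n)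

lemma recycleOp_eq_flatten (n : ℕ) (S : List ℕ) :
    recycleOp n S = (S.map (recycleBlock n)).flatten := rfl

lemma recycleOp_append (n : ℕ) (S T : List ℕ) :
    recycleOp n (S ++ T) = recycleOp n S ++ recycleOp n T := by
  simp [recycleOp_eq_flatten]

lemma recycleOp_cons (n r : ℕ) (S : List ℕ) :
    recycleOp n (r :: S) = recycleBlock n r ++ recycleOp n S := rfl

lemma mem_recycleOp {n a : ℕ} {S : List ℕ} (h : a ∈ recycleOp n S) : a = n - 1 ∨ a = n := by
  simp only [recycleOp_eq_flatten, recycleBlock, List.mem_flatten, List.mem_map] at h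
  obtain ⟨_, ⟨r, -, rfl⟩, ha⟩ := h
  simp only [List.mem_cons, List.mem_append, List.mem_replicate] at ha
  omega

def recycleBlockPrefix (N k : ℕ) : Perm (Fin (N + 1)) :=
  liftPerm N (sigmaRot N (k - 1)) * finRotate (N + 1) ^ k

lemma recycleBlockPrefix_mul_sigmaRot {N c : ℕ} (hc : 1 ≤ c) (hcN : c < N) :
    recycleBlockPrefix N (c + 1) * sigmaRot (N + 1) N = recycleBlockPrefix N (c + 2) := by
  have hρ :
      sigmaRot (N + 1) N = finRotate (N + 1) * swap ⟨N - 1, by omega⟩ ⟨N, by omega⟩ := by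
    rw [← sigmaRot_self, sigmaRot_succ (by omega) (by omega), mul_swap_mul_self]
  have hconj : finRotate (N + 1) ^ (c + 2) * swap ⟨N - 1, by omega⟩ ⟨N, by omega⟩
      = liftPerm N (swap ⟨c - 1, by omega⟩ ⟨c, hcN⟩) * finRotate (N + 1) ^ (c + 2) := by
    rw [mul_swap_eq_swap_mul, liftPerm_swap]
    congr 2 <;> ext <;> rw [val_finRotate_pow_apply] <;> simp only [Fin.val_succ]
    · rw [show N - 1 + (c + 2) = c + (N + 1) by omega, Nat.add_mod_right,
        Nat.mod_eq_of_lt (by omega)]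
      omega
    · rw [show N + (c + 2) = (c + 1) + (N + 1) by omega, Nat.add_mod_right,
        Nat.mod_eq_of_lt (by omega)]
  calc recycleBlockPrefix N (c + 1) * sigmaRot (N + 1) N
      = liftPerm N (sigmaRot N c) *
          (finRotate (N + 1) ^ (c + 2) * swap ⟨N - 1, by omega⟩ ⟨N, by omega⟩) := by
        rw [recycleBlockPrefix, hρ, Nat.add_sub_cancel, pow_succ _ (c + 1)]; group
    _ = recycleBlockPrefix N (c + 2) := by
        rw [hconj, recycleBlockPrefix, ← mul_assoc, ← map_mul, ← sigmaRot_succ hc hcN]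
        rfl

section Block

variable {N r : ℕ}

lemma length_recycleBlock (hr : 1 ≤ r) (hrN : r ≤ N) :
    (recycleBlock (N + 1) r).length = N + 1 := by
  simp only [recycleBlock, List.length_cons, List.length_append, List.length_replicate]
  omega

lemma prod_map_sigmaRot_cons_cons_replicate {j : ℕ} (hj : j < N) :
    (((N + 1) :: (N + 1) :: List.replicate j N).map (sigmaRot (N + 1))).prod =
      recycleBlockPrefix N (j + 2) := by
  induction j with
  | zero => simp [recycleBlockPrefix, sigmaRot_of_le_one, sigmaRot_self, pow_two]
  | succ j ih =>
    rw [List.replicate_succ', ← List.cons_append, ← List.cons_append, List.map_append,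
      List.prod_append, ih (by omega), List.map_singleton, List.prod_singleton,
      recycleBlockPrefix_mul_sigmaRot (by omega) hj]

lemma partialProd_recycleBlock (hr : 1 ≤ r) (hrN : r ≤ N) {k : ℕ} (hk : k ≤ r + 1) :
    partialProd (N + 1) (recycleBlock (N + 1) r) k = recycleBlockPrefix N k := by
  match k with
  | 0 => simp [partialProd, recycleBlockPrefix, sigmaRot_of_le_one]
  | 1 => simp [partialProd, recycleBlock, recycleBlockPrefix, sigmaRot_of_le_one, sigmaRot_self]
  | j + 2 =>
    rw [← prod_map_sigmaRot_cons_cons_replicate (by omega), partialProd, recycleBlock]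
    simp [List.take_append_of_le_length, List.take_replicate, show j ≤ r - 1 by omega]

lemma prod_recycleBlock (hr : 1 ≤ r) (hrN : r ≤ N) :
    ((recycleBlock (N + 1) r).map (sigmaRot (N + 1))).prod = liftPerm N (sigmaRot N r) := by
  rw [recycleBlock, Nat.add_sub_cancel, ← List.cons_append, ← List.cons_append, List.map_append,
    List.prod_append, prod_map_sigmaRot_cons_cons_replicate (by omega), List.map_replicate,
    List.prod_replicate, sigmaRot_self, recycleBlockPrefix, mul_assoc, ← pow_add,
    show r - 1 + 2 = r + 1 by omega, show r + 1 + (N + 1 - r - 1) = N + 1 by omega,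
    finRotate_pow_self, mul_one, Nat.add_sub_cancel]

end Block

section Recycle

variable {N : ℕ} {S : List ℕ}

lemma length_recycleOp (hS : ∀ r ∈ S, 1 ≤ r ∧ r ≤ N) :
    (recycleOp (N + 1) S).length = (N + 1) * S.length := by
  induction S with
  | nil => rfl
  | cons r S ih =>
    have hr := hS r List.mem_cons_self
    rw [recycleOp_cons, List.length_append, length_recycleBlock hr.1 hr.2,
      ih fun x hx => hS x (List.mem_cons_of_mem _ hx), List.length_cons]
    ring

lemma prod_recycleOp (hS : ∀ r ∈ S, 1 ≤ r ∧ r ≤ N) :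
    ((recycleOp (N + 1) S).map (sigmaRot (N + 1))).prod =
      liftPerm N ((S.map (sigmaRot N)).prod) := by
  induction S with
  | nil => simp [recycleOp]
  | cons r S ih =>
    have hr := hS r List.mem_cons_self
    rw [recycleOp_cons, List.map_append, List.prod_append, prod_recycleBlock hr.1 hr.2,
      ih fun x hx => hS x (List.mem_cons_of_mem _ hx), List.map_cons, List.prod_cons, map_mul]

lemma partialProd_recycleOp_mul_add (hS : ∀ r ∈ S, 1 ≤ r ∧ r ≤ N) {q k : ℕ}
    (hq : q < S.length) (hk : k ≤ S[q] + 1) :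
    partialProd (N + 1) (recycleOp (N + 1) S) ((N + 1) * q + k) =
      liftPerm N (partialProd N S q) * recycleBlockPrefix N k := by
  have hS' : ∀ r ∈ S.take q, 1 ≤ r ∧ r ≤ N := fun r hr => hS r (List.mem_of_mem_take hr)
  have hr := hS _ (List.getElem_mem hq)
  have hsplit : S = S.take q ++ S[q] :: S.drop (q + 1) := by
    rw [← List.drop_eq_getElem_cons hq, List.take_append_drop]
  calc partialProd (N + 1) (recycleOp (N + 1) S) ((N + 1) * q + k)
      = partialProd (N + 1) (recycleOp (N + 1) (S.take q) ++
          (recycleBlock (N + 1) S[q] ++ recycleOp (N + 1) (S.drop (q + 1))))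
          ((recycleOp (N + 1) (S.take q)).length + k) := by
        rw [length_recycleOp hS', List.length_take_of_le hq.le, ← recycleOp_cons,
          ← recycleOp_append, ← hsplit]
    _ = liftPerm N (partialProd N S q) * recycleBlockPrefix N k := by
        rw [partialProd_append_length_add, prod_recycleOp hS',
          partialProd_append_of_le _ (by rw [length_recycleBlock hr.1 hr.2]; omega),
          partialProd_recycleBlock hr.1 hr.2 hk]
        rfl

lemma partialProd_recycleOp_length (hS : ∀ r ∈ S, 1 ≤ r ∧ r ≤ N) :
    partialProd (N + 1) (recycleOp (N + 1) S) (recycleOp (N + 1) S).length =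
      liftPerm N (partialProd N S S.length) := by
  rw [partialProd_length, prod_recycleOp hS, partialProd_length]

end Recycle

lemma partialProd_recycleOp {N i : ℕ} {S : List ℕ} (hN : 2 ≤ N)
    (hS : ∀ r ∈ S, N - 1 ≤ r ∧ r ≤ N) (hi : i < (N + 1) * S.length) :
    partialProd (N + 1) (recycleOp (N + 1) S) i =
      liftPerm N (partialProd N S (i / (N + 1)) * sigmaRot N (i % (N + 1) - 1)) *
        finRotate (N + 1) ^ (i % (N + 1)) := by
  have hq : i / (N + 1) < S.length := Nat.div_lt_of_lt_mul hi
  have hk : i % (N + 1) ≤ N := Nat.lt_succ_iff.mp (Nat.mod_lt _ N.succ_pos)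
  have hr := hS _ (List.getElem_mem hq)
  conv_lhs => rw [← Nat.div_add_mod i (N + 1)]
  rw [partialProd_recycleOp_mul_add
    (fun r hr => ⟨(by omega : 1 ≤ N - 1).trans (hS r hr).1, (hS r hr).2⟩) hq (by omega),
    recycleBlockPrefix, ← mul_assoc, ← map_mul]

theorem isHamiltonSeq_recycleOp {N : ℕ} {S : List ℕ} (hN : 2 ≤ N)
    (hS : IsHamiltonSeq N {N - 1, N} S) :
    IsHamiltonSeq (N + 1) {N, N + 1} (recycleOp (N + 1) S) := by
  obtain ⟨hlen, hmem, hinj, hprod⟩ := hS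
  have hS : ∀ r ∈ S, N - 1 ≤ r ∧ r ≤ N := fun r hr => by
    rcases hmem r hr with h | h <;> simp_all
  have hS1 : ∀ r ∈ S, 1 ≤ r ∧ r ≤ N := fun r hr =>
    ⟨(by omega : 1 ≤ N - 1).trans (hS r hr).1, (hS r hr).2⟩
  have hfac : (N + 1).factorial = (N + 1) * S.length := by rw [hlen, Nat.factorial_succ]
  have hmod : ∀ m, m % (N + 1) ≤ N := fun m => Nat.lt_succ_iff.mp (Nat.mod_lt _ N.succ_pos)
  refine ⟨by rw [length_recycleOp hS1, hfac], fun r hr => ?_, fun i hi j hj h => ?_, ?_⟩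
  · rcases mem_recycleOp hr with rfl | rfl <;> simp
  · rw [hfac] at hi hj
    rw [partialProd_recycleOp hN hS hi, partialProd_recycleOp hN hS hj] at h
    obtain ⟨hx, hk⟩ := liftPerm_mul_finRotate_pow_inj (hmod i) (hmod j) h
    rw [hk, mul_left_inj] at hx
    have hq := hinj _ (hlen ▸ Nat.div_lt_of_lt_mul hi) _ (hlen ▸ Nat.div_lt_of_lt_mul hj) hx
    rw [← Nat.div_add_mod i (N + 1), ← Nat.div_add_mod j (N + 1), hq, hk]
  · rw [partialProd_recycleOp_length hS1, hprod, map_one]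

lemma recycleD_succ {N : ℕ} (hN : 1 ≤ N) :
    recycleD (N + 1) = recycleOp (N + 1) (recycleD N) := by
  obtain ⟨k, rfl⟩ := Nat.exists_eq_add_of_le' hN
  rfl

theorem isHamiltonSeq_recycleD {N : ℕ} (hN : 2 ≤ N) :
    IsHamiltonSeq N {N - 1, N} (recycleD N) := by
  induction N, hN using Nat.le_induction with
  | base => exact ⟨rfl, by simp [recycleD, recycleOp], by decide, by decide⟩
  | succ N hN ih =>
    rw [recycleD_succ (by omega), Nat.add_sub_cancel]
    exact isHamiltonSeq_recycleOp hN ih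

/-- Ruskey–Williams. For every `n ≥ 3`, the canonical recycle sequence
`D_n` is a Hamilton sequence for the restricted rotator graph `RR_n({n-1,n})`. -/
theorem stmt9 (n : ℕ) (hn : 3 ≤ n) :
    IsHamiltonSeq n {n - 1, n} (recycleD n) :=
  isHamiltonSeq_recycleD (by omega)
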